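/- arXiv:1705.02188 — 2 statements merged into one kernel-verified Lean document; each statement's English description precedes it below -/
import Mathlib

section
/- For every real x ≥ 1 and every p ∈ (0,1], the following chain of inequalities holds: 0 ≤ 1 − 1/x ≤ ((x+1)/2)^(p−1)·(x−1) ≤ (x^p − 1)/p ≤ ((x^(p−1) + 1)/2)·(x−1) ≤ x − 1. -/
/-!
The middle terms are `∫₁ˣ t^(p-1) dt = (x^p - 1)/p` and the two Hermite–Hadamard bounds for it, the
midpoint rule from below and the trapezoid rule from above, valid because `t ↦ t^(p-1)` is convex
for `p ≤ 1`. Both bounds follow by integrating, over `[a, b]`, a pointwise inequality for the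
symmetrisation `(f t + f (a + b - t)) / 2`, whose integral equals that of `f`. The outer
inequalities are elementary: `1/x ≤ ((x+1)/2)^(-1) ≤ ((x+1)/2)^(p-1)` and `x^(p-1) ≤ 1`.
-/

open Real Set intervalIntegral MeasureTheory

lemma convexOn_rpow_of_nonpos {q : ℝ} (hq : q ≤ 0) : ConvexOn ℝ (Ioi 0) fun t : ℝ ↦ t ^ q := by
  have hlog : ConvexOn ℝ (Ioi 0) fun t ↦ log t * q := by
    simpa [mul_comm] using strictConcaveOn_log_Ioi.concaveOn.neg.smul (neg_nonneg.2 hq)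
  have himage : Convex ℝ ((fun t ↦ log t * q) '' Ioi 0) :=
    (isPreconnected_Ioi.image _ ((continuousOn_log.mono fun _ ht ↦ ne_of_gt ht).mul_const q)).convex
  refine ((convexOn_exp.subset (subset_univ _) himage).comp hlog
    (exp_monotone.monotoneOn _)).congr fun t ht ↦ ?_
  exact (rpow_def_of_pos ht q).symm

section HermiteHadamard

variable {f : ℝ → ℝ} {a b t : ℝ}

lemma IntervalIntegrable.comp_reflect (hf : IntervalIntegrable f volume a b) :
    IntervalIntegrable (fun x ↦ f (a + b - x)) volume a b := by
  simpa using (hf.comp_sub_left (a + b)).symm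

lemma integral_eq_integral_average_reflect (hf : IntervalIntegrable f volume a b) :
    ∫ x in a..b, f x = ∫ x in a..b, (f x + f (a + b - x)) / 2 := by
  have hrefl : ∫ x in a..b, f (a + b - x) = ∫ x in a..b, f x := by
    simp [integral_comp_sub_left]
  rw [intervalIntegral.integral_div, integral_add hf hf.comp_reflect, hrefl]
  ring

lemma ConvexOn.map_midpoint_le_average_reflect (hf : ConvexOn ℝ (Icc a b) f) (ht : t ∈ Icc a b) :
    f ((a + b) / 2) ≤ (f t + f (a + b - t)) / 2 := by
  have ht' : a + b - t ∈ Icc a b := ⟨by linarith [ht.2], by linarith [ht.1]⟩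
  have h := hf.2 ht ht' (by norm_num : (0 : ℝ) ≤ 1 / 2) (by norm_num : (0 : ℝ) ≤ 1 / 2) (by norm_num)
  have hmid : (1 / 2 : ℝ) * t + 1 / 2 * (a + b - t) = (a + b) / 2 := by ring
  simp only [smul_eq_mul, hmid] at h
  linarith

lemma ConvexOn.average_reflect_le_average_endpoints (hf : ConvexOn ℝ (Icc a b) f)
    (ht : t ∈ Icc a b) : (f t + f (a + b - t)) / 2 ≤ (f a + f b) / 2 := by
  rcases eq_or_lt_of_le (ht.1.trans ht.2) with rfl | hab
  · obtain rfl : t = a := le_antisymm ht.2 ht.1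
    simp
  have hne : b - a ≠ 0 := by linarith
  have ha : a ∈ Icc a b := left_mem_Icc.2 hab.le
  have hb : b ∈ Icc a b := right_mem_Icc.2 hab.le
  have hwa : 0 ≤ (b - t) / (b - a) := div_nonneg (by linarith [ht.2]) (by linarith)
  have hwb : 0 ≤ (t - a) / (b - a) := div_nonneg (by linarith [ht.1]) (by linarith)
  have hsum : (b - t) / (b - a) + (t - a) / (b - a) = 1 := by field_simp; ring
  have h₁ := hf.2 ha hb hwa hwb hsum
  have h₂ := hf.2 ha hb hwb hwa (by linarith)
  have e₁ : (b - t) / (b - a) * a + (t - a) / (b - a) * b = t := by field_simp; ring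
  have e₂ : (t - a) / (b - a) * a + (b - t) / (b - a) * b = a + b - t := by field_simp; ring
  simp only [smul_eq_mul, e₁, e₂] at h₁ h₂
  linear_combination (h₁ + h₂ + (f a + f b) * hsum) / 2

theorem ConvexOn.map_midpoint_mul_le_integral (hf : ConvexOn ℝ (Icc a b) f)
    (hint : IntervalIntegrable f volume a b) (hab : a ≤ b) :
    f ((a + b) / 2) * (b - a) ≤ ∫ x in a..b, f x := by
  rw [integral_eq_integral_average_reflect hint]
  calc
    f ((a + b) / 2) * (b - a) = ∫ _ in a..b, f ((a + b) / 2) := by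
      rw [intervalIntegral.integral_const, smul_eq_mul, mul_comm]
    _ ≤ _ := integral_mono_on hab intervalIntegrable_const
      ((hint.add hint.comp_reflect).div_const 2) fun t ht ↦ hf.map_midpoint_le_average_reflect ht

theorem ConvexOn.integral_le_average_endpoints_mul (hf : ConvexOn ℝ (Icc a b) f)
    (hint : IntervalIntegrable f volume a b) (hab : a ≤ b) :
    ∫ x in a..b, f x ≤ (f a + f b) / 2 * (b - a) := by
  rw [integral_eq_integral_average_reflect hint]
  calc _ ≤ ∫ _ in a..b, (f a + f b) / 2 :=
        integral_mono_on hab ((hint.add hint.comp_reflect).div_const 2) intervalIntegrable_const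
          fun t ht ↦ hf.average_reflect_le_average_endpoints ht
    _ = (f a + f b) / 2 * (b - a) := by
      rw [intervalIntegral.integral_const, smul_eq_mul, mul_comm]

end HermiteHadamard

theorem stmt2 (x p : ℝ) (hx : 1 ≤ x) (hp0 : 0 < p) (hp1 : p ≤ 1) :
    0 ≤ 1 - 1 / x ∧
    1 - 1 / x ≤ ((x + 1) / 2) ^ (p - 1) * (x - 1) ∧
    ((x + 1) / 2) ^ (p - 1) * (x - 1) ≤ (x ^ p - 1) / p ∧
    (x ^ p - 1) / p ≤ ((x ^ (p - 1) + 1) / 2) * (x - 1) ∧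
    ((x ^ (p - 1) + 1) / 2) * (x - 1) ≤ x - 1 := by
  have hx0 : 0 < x := by linarith
  have hconv : ConvexOn ℝ (Icc 1 x) fun t : ℝ ↦ t ^ (p - 1) :=
    (convexOn_rpow_of_nonpos (by linarith)).subset (fun t ht ↦ one_pos.trans_le ht.1)
      (convex_Icc 1 x)
  have hint : IntervalIntegrable (fun t : ℝ ↦ t ^ (p - 1)) volume 1 x :=
    intervalIntegral.intervalIntegrable_rpow' (by linarith)
  have hI : ∫ t in (1 : ℝ)..x, t ^ (p - 1) = (x ^ p - 1) / p := by
    rw [integral_rpow (Or.inl (by linarith))]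
    simp
  have hmid := hconv.map_midpoint_mul_le_integral hint hx
  have htrap := hconv.integral_le_average_endpoints_mul hint hx
  rw [hI, add_comm 1 x] at hmid
  rw [hI, one_rpow, add_comm 1] at htrap
  have hinv : x⁻¹ ≤ ((x + 1) / 2) ^ (p - 1) :=
    calc x⁻¹ ≤ ((x + 1) / 2)⁻¹ := inv_anti₀ (by positivity) (by linarith)
      _ = ((x + 1) / 2) ^ (-1 : ℝ) := (rpow_neg_one _).symm
      _ ≤ ((x + 1) / 2) ^ (p - 1) := rpow_le_rpow_of_exponent_le (by linarith) (by linarith)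
  refine ⟨sub_nonneg.2 (div_le_one_of_le₀ hx hx0.le), ?_, hmid, htrap, ?_⟩
  · calc 1 - 1 / x = x⁻¹ * (x - 1) := by field_simp
      _ ≤ ((x + 1) / 2) ^ (p - 1) * (x - 1) := mul_le_mul_of_nonneg_right hinv (by linarith)
  · have : x ^ (p - 1) ≤ 1 := rpow_le_one_of_one_le_of_nonpos hx (by linarith)
    exact mul_le_of_le_one_left (by linarith) (by linarith)
end

section
/- Let A and B be n×n complex positive definite matrices with A ≤ B in the Loewner order, and let p ∈ (0,1]. Then the full chain 0 ≤ A − A B^{−1} A ≤ K_p(A,B) ≤ T_p(A|B) ≤ (1/2)·(A #_p B − A ♮_{p−1} B + B − A) ≤ B − A holds in the Loewner order. -/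
/-!
Put `C = A^{-1/2} B A^{-1/2}`. Every matrix in the chain is a perspective `A^{1/2} f(C) A^{1/2}`
of an explicit scalar function `f`, and `f ↦ A^{1/2} f(C) A^{1/2}` is linear and monotone in `f`
on the spectrum of `C`, which lies in `[1, ∞)` because `A ≤ B`. The chain therefore reduces to
`0 ≤ 1 - 1/t ≤ ((t+1)/2)^{p-1} (t-1) ≤ (t^p - 1)/p ≤ (t-1)(1 + t^{p-1})/2 ≤ t - 1` for `t ≥ 1`.
As `(t^p - 1)/p = ∫₁ᵗ s^{p-1} ds` with `s^{p-1}` convex, the two middle inequalities are the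
midpoint and trapezoid bounds of Hermite–Hadamard; they are proved by comparing derivatives, using
the tangent line inequality for `s^{p-1}` and weighted AM–GM respectively.
-/

open Matrix ComplexOrder

/-- Real power of a (Hermitian) complex matrix via the continuous functional calculus,
corresponding to `Matrix.PosDef.rpow` on positive definite matrices. -/
noncomputable def mrpow {n : Type*} [Fintype n] [DecidableEq n]
    (A : Matrix n n ℂ) (r : ℝ) : Matrix n n ℂ :=
  cfc (fun t : ℝ => t ^ r) A

/-- The Loewner order: `loe X Y` means `Y - X` is positive semidefinite. -/
def loe {n : Type*} [Fintype n] (X Y : Matrix n n ℂ) : Prop :=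
  (Y - X).PosSemidef

/-- `A ♮ᵣ B = A^{1/2} (A^{-1/2} B A^{-1/2})^r A^{1/2}`; for `r ∈ [0,1]` this is the
weighted geometric mean `A #ᵣ B`. -/
noncomputable def natu {n : Type*} [Fintype n] [DecidableEq n]
    (A B : Matrix n n ℂ) (r : ℝ) : Matrix n n ℂ :=
  mrpow A (1 / 2) * mrpow (mrpow A (-(1 / 2)) * B * mrpow A (-(1 / 2))) r * mrpow A (1 / 2)

/-- The Tsallis relative operator entropy `T_p(A|B) = (A #_p B - A) / p`. -/
noncomputable def TsallisEntropy {n : Type*} [Fintype n] [DecidableEq n]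
    (A B : Matrix n n ℂ) (p : ℝ) : Matrix n n ℂ :=
  (1 / p : ℝ) • (natu A B p - A)

/-- `K_p(A,B) = A^{1/2} ((A^{-1/2} B A^{-1/2} + I)/2)^{p-1} (A^{-1/2} B A^{-1/2} - I) A^{1/2}`. -/
noncomputable def Kp {n : Type*} [Fintype n] [DecidableEq n]
    (A B : Matrix n n ℂ) (p : ℝ) : Matrix n n ℂ :=
  mrpow A (1 / 2) *
    mrpow ((1 / 2 : ℝ) • (mrpow A (-(1 / 2)) * B * mrpow A (-(1 / 2)) + 1)) (p - 1) *
    (mrpow A (-(1 / 2)) * B * mrpow A (-(1 / 2)) - 1) * mrpow A (1 / 2)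

open scoped MatrixOrder
open Set

theorem one_add_mul_sub_one_le_rpow_of_nonpos {w r : ℝ} (hw : 0 < w) (hr : r ≤ 0) :
    1 + r * (w - 1) ≤ w ^ r := by
  have h := one_add_mul_self_le_rpow_one_add (s := w⁻¹ - 1) (by linarith [inv_pos.2 hw])
    (p := 1 - r) (by linarith)
  rw [add_sub_cancel, Real.inv_rpow hw.le, ← Real.rpow_neg hw.le, neg_sub,
    Real.rpow_sub_one hw.ne', le_div_iff₀ hw] at h
  calc 1 + r * (w - 1) = (1 + (1 - r) * (w⁻¹ - 1)) * w := by field_simp; ring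
    _ ≤ w ^ r := h

theorem rpow_tangent_le_rpow_of_nonpos {x y r : ℝ} (hx : 0 < x) (hy : 0 < y) (hr : r ≤ 0) :
    y ^ r + r * y ^ (r - 1) * (x - y) ≤ x ^ r := by
  have h := one_add_mul_sub_one_le_rpow_of_nonpos (div_pos hx hy) hr
  rw [Real.div_rpow hx.le hy.le, le_div_iff₀ (Real.rpow_pos_of_pos hy r)] at h
  calc y ^ r + r * y ^ (r - 1) * (x - y) = (1 + r * (x / y - 1)) * y ^ r := by
        rw [Real.rpow_sub_one hy.ne']; field_simp
    _ ≤ x ^ r := h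

theorem le_of_hasDerivAt_le {f g f' g' : ℝ → ℝ} {a b : ℝ} (hab : a ≤ b)
    (hf : ∀ x ∈ Icc a b, HasDerivAt f (f' x) x) (hg : ∀ x ∈ Icc a b, HasDerivAt g (g' x) x)
    (ha : f a ≤ g a) (hf'g' : ∀ x ∈ Ico a b, f' x ≤ g' x) : f b ≤ g b :=
  image_le_of_deriv_right_le_deriv_boundary
    (fun x hx => (hf x hx).continuousAt.continuousWithinAt)
    (fun x hx => (hf x (Ico_subset_Icc_self hx)).hasDerivWithinAt) ha
    (fun x hx => (hg x hx).continuousAt.continuousWithinAt)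
    (fun x hx => (hg x (Ico_subset_Icc_self hx)).hasDerivWithinAt) hf'g' ⟨hab, le_rfl⟩

theorem hasDerivAt_tsallis {p x : ℝ} (hp : p ≠ 0) (hx : 0 < x) :
    HasDerivAt (fun t => (t ^ p - 1) / p) (x ^ (p - 1)) x :=
  (((Real.hasDerivAt_rpow_const (Or.inl hx.ne')).sub_const 1).div_const p).congr_deriv
    (by field_simp)

theorem one_sub_inv_le_mid_rpow_mul {p t : ℝ} (hp0 : 0 ≤ p) (hp1 : p ≤ 1) (ht : 1 ≤ t) :
    1 - t⁻¹ ≤ ((t + 1) / 2) ^ (p - 1) * (t - 1) := by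
  have ht0 : 0 < t := by linarith
  calc 1 - t⁻¹ = t ^ (-1 : ℝ) * (t - 1) := by rw [Real.rpow_neg_one]; field_simp
    _ ≤ ((t + 1) / 2) ^ (p - 1) * (t - 1) := by
      refine mul_le_mul_of_nonneg_right ?_ (by linarith)
      calc t ^ (-1 : ℝ) ≤ t ^ (p - 1) := Real.rpow_le_rpow_of_exponent_le ht (by linarith)
        _ ≤ ((t + 1) / 2) ^ (p - 1) :=
          Real.rpow_le_rpow_of_nonpos (by linarith) (by linarith) (by linarith)

theorem mid_rpow_mul_le_tsallis {p t : ℝ} (hp0 : 0 < p) (hp1 : p ≤ 1) (ht : 1 ≤ t) :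
    ((t + 1) / 2) ^ (p - 1) * (t - 1) ≤ (t ^ p - 1) / p := by
  refine le_of_hasDerivAt_le (f := fun s => ((s + 1) / 2) ^ (p - 1) * (s - 1))
    (f' := fun s =>
      ((s + 1) / 2) ^ (p - 1) + (p - 1) * ((s + 1) / 2) ^ (p - 1 - 1) * (s - 1) / 2)
    ht (fun x hx => ?_) (fun x hx => hasDerivAt_tsallis hp0.ne' (by linarith [hx.1]))
    (by norm_num) (fun x hx => ?_)
  · have hm : HasDerivAt (fun s : ℝ => (s + 1) / 2) (1 / 2) x := by
      simpa using ((hasDerivAt_id x).add_const 1).div_const 2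
    exact ((hm.rpow_const (Or.inl (by linarith [hx.1]))).mul
      ((hasDerivAt_id x).sub_const 1)).congr_deriv (by simp only [id]; ring)
  · have h := rpow_tangent_le_rpow_of_nonpos (x := x) (y := (x + 1) / 2) (r := p - 1)
      (by linarith [hx.1]) (by linarith [hx.1]) (by linarith)
    linarith

theorem tsallis_le_trapezoid {p t : ℝ} (hp0 : 0 < p) (hp1 : p ≤ 1) (ht : 1 ≤ t) :
    (t ^ p - 1) / p ≤ (t ^ p - t ^ (p - 1) + t - 1) / 2 := by
  refine le_of_hasDerivAt_le (g := fun s => (s ^ p - s ^ (p - 1) + s - 1) / 2)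
    (g' := fun s => (p * s ^ (p - 1) - (p - 1) * s ^ (p - 1 - 1) + 1) / 2)
    ht (fun x hx => hasDerivAt_tsallis hp0.ne' (by linarith [hx.1])) (fun x hx => ?_)
    (by norm_num) (fun x hx => ?_)
  · have hx0 : x ≠ 0 := by linarith [hx.1]
    exact ((((Real.hasDerivAt_rpow_const (Or.inl hx0)).sub
      (Real.hasDerivAt_rpow_const (Or.inl hx0))).add (hasDerivAt_id x)).sub_const 1).div_const 2
  · have hx0 : 0 < x := by linarith [hx.1]
    have amgm := Real.geom_mean_le_arith_mean2_weighted
      (p₁ := x ^ (p - 1)) (p₂ := x ^ (p - 1 - 1)) hp0.le (sub_nonneg.2 hp1) (by positivity)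
      (by positivity) (add_sub_cancel p 1)
    have hsq : (x ^ (p - 1)) ^ p * (x ^ (p - 1 - 1)) ^ (1 - p) = (x ^ (p - 1)) ^ 2 := by
      rw [← Real.rpow_mul hx0.le, ← Real.rpow_mul hx0.le, ← Real.rpow_add hx0,
        ← Real.rpow_natCast, ← Real.rpow_mul hx0.le]
      ring_nf
    nlinarith [sq_nonneg (x ^ (p - 1) - 1)]

theorem trapezoid_le_sub_one {p t : ℝ} (hp1 : p ≤ 1) (ht : 1 ≤ t) :
    (t ^ p - t ^ (p - 1) + t - 1) / 2 ≤ t - 1 := by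
  have hpow : t ^ p = t ^ (p - 1) * t := by rw [← Real.rpow_add_one (by linarith)]; ring_nf
  have hle : t ^ (p - 1) ≤ 1 := Real.rpow_le_one_of_one_le_of_nonpos ht (by linarith)
  nlinarith

section Perspective

variable {n : Type*} [Fintype n]

theorem loe_iff_le {X Y : Matrix n n ℂ} : loe X Y ↔ X ≤ Y := Iff.rfl

variable [DecidableEq n]

-- The real spectrum of a matrix is finite, so `fun_prop` can discharge every continuity side
-- condition of the `cfc` lemmas.
@[fun_prop]
theorem Matrix.continuousOn_spectrum_real (C : Matrix n n ℂ) (f : ℝ → ℝ) :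
    ContinuousOn f (spectrum ℝ C) :=
  C.finite_real_spectrum.continuousOn f

theorem isSelfAdjoint_mrpow (A : Matrix n n ℂ) (r : ℝ) : IsSelfAdjoint (mrpow A r) :=
  cfc_predicate _ A

theorem mrpow_add {A : Matrix n n ℂ} (hA : ∀ x ∈ spectrum ℝ A, 0 < x) (r s : ℝ) :
    mrpow A (r + s) = mrpow A r * mrpow A s := by
  rw [mrpow, mrpow, mrpow, ← cfc_mul (· ^ r) (· ^ s) A]
  exact cfc_congr fun x hx => Real.rpow_add (hA x hx) r s

theorem mrpow_zero {A : Matrix n n ℂ} (hA : IsSelfAdjoint A) : mrpow A 0 = 1 := by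
  simp only [mrpow, Real.rpow_zero, cfc_const_one ℝ A hA]

theorem mrpow_one {A : Matrix n n ℂ} (hA : IsSelfAdjoint A) : mrpow A 1 = A := by
  simp only [mrpow, Real.rpow_one, cfc_id' ℝ A hA]

theorem mul_cfc_inv_self {C : Matrix n n ℂ} (hC : IsSelfAdjoint C)
    (h0 : ∀ x ∈ spectrum ℝ C, x ≠ 0) : C * cfc (·⁻¹ : ℝ → ℝ) C = 1 := by
  conv_lhs => arg 1; rw [← cfc_id' ℝ C hC]
  rw [← cfc_mul, cfc_congr (g := 1) fun x hx => mul_inv_cancel₀ (h0 x hx), cfc_one ℝ C hC]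

noncomputable def invSqrtConj (A B : Matrix n n ℂ) : Matrix n n ℂ :=
  mrpow A (-(1 / 2)) * B * mrpow A (-(1 / 2))

noncomputable def perspective (A B : Matrix n n ℂ) : (ℝ → ℝ) →ₗ[ℝ] Matrix n n ℂ where
  toFun f := mrpow A (1 / 2) * cfc f (invSqrtConj A B) * mrpow A (1 / 2)
  map_add' f g := by
    change _ * cfc (fun x => f x + g x) _ * _ = _
    rw [cfc_add, mul_add, add_mul]
  map_smul' c f := by
    change _ * cfc (fun x => c • f x) _ * _ = _
    rw [cfc_smul, RingHom.id_apply, mul_smul_comm, smul_mul_assoc]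

theorem perspective_apply (A B : Matrix n n ℂ) (f : ℝ → ℝ) :
    perspective A B f = mrpow A (1 / 2) * cfc f (invSqrtConj A B) * mrpow A (1 / 2) :=
  rfl

theorem natu_eq_perspective (A B : Matrix n n ℂ) (r : ℝ) :
    natu A B r = perspective A B (· ^ r) :=
  rfl

theorem isSelfAdjoint_invSqrtConj (A : Matrix n n ℂ) {B : Matrix n n ℂ} (hB : IsSelfAdjoint B) :
    IsSelfAdjoint (invSqrtConj A B) := by
  simpa [invSqrtConj, (isSelfAdjoint_mrpow A _).star_eq] using hB.conjugate (mrpow A (-(1 / 2)))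

theorem perspective_mono {A B : Matrix n n ℂ} {f g : ℝ → ℝ}
    (h : ∀ x ∈ spectrum ℝ (invSqrtConj A B), f x ≤ g x) :
    perspective A B f ≤ perspective A B g :=
  (isSelfAdjoint_mrpow A _).conjugate_le_conjugate (cfc_mono h)

theorem Kp_eq_perspective {A B : Matrix n n ℂ} (hB : IsSelfAdjoint B) (p : ℝ) :
    Kp A B p = perspective A B (fun t => ((t + 1) / 2) ^ (p - 1) * (t - 1)) := by
  have hC := isSelfAdjoint_invSqrtConj A hB
  set C := invSqrtConj A B
  have hmid : (1 / 2 : ℝ) • (C + 1) = cfc (fun t : ℝ => (t + 1) / 2) C := by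
    simp only [div_eq_inv_mul, cfc_const_mul (2⁻¹ : ℝ) (fun t : ℝ => t + 1) C,
      cfc_add_const (1 : ℝ) (fun t : ℝ => t) C, cfc_id' ℝ C hC, mul_one, map_one]
  have hsub : C - 1 = cfc (fun t : ℝ => t - 1) C := by
    rw [cfc_sub (fun t : ℝ => t) (fun _ => 1) C, cfc_id' ℝ C hC, cfc_const_one ℝ C hC]
  change mrpow A (1 / 2) * mrpow ((1 / 2 : ℝ) • (C + 1)) (p - 1) * (C - 1) * mrpow A (1 / 2) = _
  rw [hmid, hsub, mul_assoc (mrpow A (1 / 2)), mrpow.eq_def _ (p - 1),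
    ← cfc_comp' (· ^ (p - 1)) _ C ((C.finite_real_spectrum.image _).continuousOn _), ← cfc_mul]
  rfl

namespace Matrix.PosDef

variable {A B : Matrix n n ℂ}

theorem mrpow_add (hA : A.PosDef) (r s : ℝ) : mrpow A (r + s) = mrpow A r * mrpow A s :=
  _root_.mrpow_add (fun _ => hA.isStrictlyPositive.spectrum_pos) r s

theorem mrpow_half_mul_mrpow_half (hA : A.PosDef) : mrpow A (1 / 2) * mrpow A (1 / 2) = A := by
  rw [← hA.mrpow_add, add_halves, mrpow_one hA.1]

theorem mrpow_half_mul_mrpow_neg_half (hA : A.PosDef) :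
    mrpow A (1 / 2) * mrpow A (-(1 / 2)) = 1 := by
  rw [← hA.mrpow_add, add_neg_cancel, mrpow_zero hA.1]

theorem mrpow_neg_half_mul_mrpow_half (hA : A.PosDef) :
    mrpow A (-(1 / 2)) * mrpow A (1 / 2) = 1 := by
  rw [← hA.mrpow_add, neg_add_cancel, mrpow_zero hA.1]

theorem mrpow_neg_half_mul_self (hA : A.PosDef) : mrpow A (-(1 / 2)) * A = mrpow A (1 / 2) := by
  calc mrpow A (-(1 / 2)) * A = mrpow A (-(1 / 2)) * mrpow A 1 := by rw [mrpow_one hA.1]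
    _ = mrpow A (1 / 2) := by rw [← hA.mrpow_add]; norm_num

theorem self_mul_mrpow_neg_half (hA : A.PosDef) : A * mrpow A (-(1 / 2)) = mrpow A (1 / 2) := by
  calc A * mrpow A (-(1 / 2)) = mrpow A 1 * mrpow A (-(1 / 2)) := by rw [mrpow_one hA.1]
    _ = mrpow A (1 / 2) := by rw [← hA.mrpow_add]; norm_num

theorem mrpow_half_mul_invSqrtConj_mul_mrpow_half (hA : A.PosDef) (B : Matrix n n ℂ) :
    mrpow A (1 / 2) * invSqrtConj A B * mrpow A (1 / 2) = B := by
  rw [invSqrtConj, ← mul_assoc, ← mul_assoc, hA.mrpow_half_mul_mrpow_neg_half, one_mul,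
    mul_assoc, hA.mrpow_neg_half_mul_mrpow_half, mul_one]

theorem one_le_invSqrtConj (hA : A.PosDef) (hAB : A ≤ B) : 1 ≤ invSqrtConj A B := by
  have h := (isSelfAdjoint_mrpow A (-(1 / 2))).conjugate_le_conjugate hAB
  rwa [hA.mrpow_neg_half_mul_self, hA.mrpow_half_mul_mrpow_neg_half] at h

theorem one_le_of_mem_spectrum_invSqrtConj (hA : A.PosDef) (hAB : A ≤ B) {x : ℝ}
    (hx : x ∈ spectrum ℝ (invSqrtConj A B)) : 1 ≤ x := by
  have hC := isSelfAdjoint_invSqrtConj A (hA.1.isSelfAdjoint.of_ge hAB)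
  exact (algebraMap_le_iff_le_spectrum (a := invSqrtConj A B)).1
    (by simpa using hA.one_le_invSqrtConj hAB) x hx

theorem perspective_one (hA : A.PosDef) (hB : IsSelfAdjoint B) : perspective A B 1 = A := by
  rw [perspective_apply, cfc_one ℝ _ (isSelfAdjoint_invSqrtConj A hB), mul_one,
    hA.mrpow_half_mul_mrpow_half]

theorem perspective_id (hA : A.PosDef) (hB : IsSelfAdjoint B) : perspective A B id = B := by
  rw [perspective_apply, cfc_id ℝ _ (isSelfAdjoint_invSqrtConj A hB),
    hA.mrpow_half_mul_invSqrtConj_mul_mrpow_half]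

theorem perspective_inv (hA : A.PosDef) (hAB : A ≤ B) :
    perspective A B (·⁻¹ : ℝ → ℝ) = A * B⁻¹ * A := by
  have hCX := mul_cfc_inv_self (isSelfAdjoint_invSqrtConj A (hA.1.isSelfAdjoint.of_ge hAB))
    fun x hx => (zero_lt_one.trans_le (hA.one_le_of_mem_spectrum_invSqrtConj hAB hx)).ne'
  have hST := hA.mrpow_half_mul_mrpow_neg_half
  set S := mrpow A (1 / 2)
  set T := mrpow A (-(1 / 2))
  set C := invSqrtConj A B
  set X := cfc (·⁻¹ : ℝ → ℝ) C
  have hBinv : B⁻¹ = T * X * T := by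
    refine Matrix.inv_eq_right_inv ?_
    calc B * (T * X * T) = S * C * S * (T * X * T) := by
          rw [hA.mrpow_half_mul_invSqrtConj_mul_mrpow_half]
      _ = S * (C * X) * T := by simp only [mul_assoc, ← mul_assoc S T, hST, one_mul]
      _ = 1 := by rw [hCX, mul_one, hST]
  calc perspective A B (·⁻¹ : ℝ → ℝ) = S * X * S := rfl
    _ = A * T * X * (T * A) := by rw [hA.self_mul_mrpow_neg_half, hA.mrpow_neg_half_mul_self]
    _ = A * B⁻¹ * A := by rw [hBinv]; simp only [mul_assoc]

theorem sub_mul_inv_mul_eq_perspective (hA : A.PosDef) (hAB : A ≤ B) :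
    A - A * B⁻¹ * A = perspective A B (fun t => 1 - t⁻¹) := by
  rw [show (fun t : ℝ => 1 - t⁻¹) = 1 - (·⁻¹) from rfl, map_sub,
    hA.perspective_one (hA.1.isSelfAdjoint.of_ge hAB), hA.perspective_inv hAB]

theorem tsallisEntropy_eq_perspective (hA : A.PosDef) (hB : IsSelfAdjoint B) (p : ℝ) :
    TsallisEntropy A B p = perspective A B (fun t => (t ^ p - 1) / p) := by
  have hf : (fun t : ℝ => (t ^ p - 1) / p) = (1 / p) • ((· ^ p) - 1) := by
    ext t
    simp [div_eq_inv_mul]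
  rw [TsallisEntropy, natu_eq_perspective, hf, map_smul, map_sub, hA.perspective_one hB]

theorem trapezoid_eq_perspective (hA : A.PosDef) (hB : IsSelfAdjoint B) (p : ℝ) :
    (1 / 2 : ℝ) • (natu A B p - natu A B (p - 1) + B - A) =
      perspective A B (fun t => (t ^ p - t ^ (p - 1) + t - 1) / 2) := by
  have hf : (fun t : ℝ => (t ^ p - t ^ (p - 1) + t - 1) / 2) =
      (1 / 2 : ℝ) • ((· ^ p) - (· ^ (p - 1)) + id - 1) := by
    ext t
    simp [div_eq_inv_mul]
  rw [natu_eq_perspective, natu_eq_perspective, hf, map_smul, map_sub, map_add, map_sub,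
    hA.perspective_one hB, hA.perspective_id hB]

theorem sub_eq_perspective (hA : A.PosDef) (hB : IsSelfAdjoint B) :
    B - A = perspective A B (fun t => t - 1) := by
  rw [show (fun t : ℝ => t - 1) = id - 1 from rfl, map_sub, hA.perspective_one hB,
    hA.perspective_id hB]

end Matrix.PosDef

end Perspective

theorem stmt8_general {n : Type*} [Fintype n] [DecidableEq n] {A B : Matrix n n ℂ}
    (hA : A.PosDef) (hAB : loe A B)
    {p : ℝ} (hp0 : 0 < p) (hp1 : p ≤ 1) :
    loe 0 (A - A * B⁻¹ * A) ∧
    loe (A - A * B⁻¹ * A) (Kp A B p) ∧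
    loe (Kp A B p) (TsallisEntropy A B p) ∧
    loe (TsallisEntropy A B p)
      ((1 / 2 : ℝ) • (natu A B p - natu A B (p - 1) + B - A)) ∧
    loe ((1 / 2 : ℝ) • (natu A B p - natu A B (p - 1) + B - A)) (B - A) := by
  rw [loe_iff_le] at hAB
  have hB : IsSelfAdjoint B := hA.1.isSelfAdjoint.of_ge hAB
  have mono {f g : ℝ → ℝ} (hfg : ∀ t, 1 ≤ t → f t ≤ g t) :
      loe (perspective A B f) (perspective A B g) :=
    loe_iff_le.2 <| perspective_mono fun x hx =>
      hfg x (hA.one_le_of_mem_spectrum_invSqrtConj hAB hx)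
  rw [hA.sub_mul_inv_mul_eq_perspective hAB, Kp_eq_perspective hB,
    hA.tsallisEntropy_eq_perspective hB, hA.trapezoid_eq_perspective hB, hA.sub_eq_perspective hB,
    ← map_zero (perspective A B)]
  exact ⟨mono fun t ht => sub_nonneg.2 (inv_le_one_of_one_le₀ ht),
    mono fun t ht => one_sub_inv_le_mid_rpow_mul hp0.le hp1 ht,
    mono fun t ht => mid_rpow_mul_le_tsallis hp0 hp1 ht,
    mono fun t ht => tsallis_le_trapezoid hp0 hp1 ht,
    mono fun t ht => trapezoid_le_sub_one hp1 ht⟩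

theorem stmt8 {n : Type*} [Fintype n] [DecidableEq n] {A B : Matrix n n ℂ}
    (hA : A.PosDef) (hB : B.PosDef) (hAB : loe A B)
    {p : ℝ} (hp0 : 0 < p) (hp1 : p ≤ 1) :
    loe 0 (A - A * B⁻¹ * A) ∧
    loe (A - A * B⁻¹ * A) (Kp A B p) ∧
    loe (Kp A B p) (TsallisEntropy A B p) ∧
    loe (TsallisEntropy A B p)
      ((1 / 2 : ℝ) • (natu A B p - natu A B (p - 1) + B - A)) ∧
    loe ((1 / 2 : ℝ) • (natu A B p - natu A B (p - 1) + B - A)) (B - A) :=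
  stmt8_general hA hAB hp0 hp1
end
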